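/- arXiv:2403.01631 — 7 statements merged into one kernel-verified Lean document; each statement's English description precedes it below -/
import Mathlib

section
/- If a tuple r ∈ R joins with no tuple of S (i.e., no s ∈ S agrees with r on Σ(R) ∩ Σ(S)), then removing r from R does not change the natural join of any collection of relations that includes both R and S: (R ⋈ S ⋈ T_1 ⋈ ... ⋈ T_k) = ((R \ {r}) ⋈ S ⋈ T_1 ⋈ ... ⋈ T_k). -/
/-- Restriction (projection) of a tuple to an attribute set. -/
def restrict {A V : Type*} [DecidableEq A] (s : Finset A) (t : A → Option V) :
    A → Option V :=
  fun a => if a ∈ s then t a else none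

/-- `t` is a tuple over schema `s`: defined exactly on `s`. -/
def IsTuple {A V : Type*} (s : Finset A) (t : A → Option V) : Prop :=
  ∀ a, (t a).isSome ↔ a ∈ s

/-- Natural join of two relations with schemas `sR`, `sS`. -/
def Join {A V : Type*} [DecidableEq A] (sR sS : Finset A)
    (R S : Set (A → Option V)) : Set (A → Option V) :=
  {t | IsTuple (sR ∪ sS) t ∧ restrict sR t ∈ R ∧ restrict sS t ∈ S}

/-- Semijoin: tuples of `R` agreeing with some tuple of `S` on the common attributes. -/
def Semijoin {A V : Type*} [DecidableEq A] (sR sS : Finset A)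
    (R S : Set (A → Option V)) : Set (A → Option V) :=
  {r ∈ R | ∃ s ∈ S, restrict (sR ∩ sS) r = restrict (sR ∩ sS) s}

/-- Antijoin: tuples of `R` agreeing with no tuple of `S` on the common attributes. -/
def Antijoin {A V : Type*} [DecidableEq A] (sR sS : Finset A)
    (R S : Set (A → Option V)) : Set (A → Option V) :=
  {r ∈ R | ¬ ∃ s ∈ S, restrict (sR ∩ sS) r = restrict (sR ∩ sS) s}

/-- Projection of a relation onto an attribute set. -/
def Proj {A V : Type*} [DecidableEq A] (s : Finset A)
    (R : Set (A → Option V)) : Set (A → Option V) :=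
  restrict s '' R

/-- Natural join of a finite family of relations. -/
def JoinAll {A V : Type*} [DecidableEq A] {n : ℕ} (sch : Fin n → Finset A)
    (Rel : Fin n → Set (A → Option V)) : Set (A → Option V) :=
  {t | IsTuple (Finset.univ.biUnion sch) t ∧ ∀ i, restrict (sch i) t ∈ Rel i}

lemma restrict_restrict {A V : Type*} [DecidableEq A] (s u : Finset A)
    (t : A → Option V) (h : s ⊆ u) :
    restrict s (restrict u t) = restrict s t := by
  funext a
  simp only [restrict]
  by_cases ha : a ∈ s
  · simp [ha, h ha]
  · simp [ha]

theorem dangling_tuple_deletion {A V : Type*} [DecidableEq A] {n : ℕ}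
    (sch : Fin n → Finset A) (Rel : Fin n → Set (A → Option V))
    (hfin : ∀ i, (Rel i).Finite)
    (iR iS : Fin n) (hne : iR ≠ iS)
    (r : A → Option V) (hr : r ∈ Rel iR)
    (hdangling : ∀ s ∈ Rel iS,
      restrict (sch iR ∩ sch iS) r ≠ restrict (sch iR ∩ sch iS) s) :
    JoinAll sch Rel = JoinAll sch (Function.update Rel iR (Rel iR \ {r})) := by
  ext t
  simp only [JoinAll, Set.mem_setOf_eq, and_congr_right_iff]
  intro htup
  constructor
  · intro h i
    rcases eq_or_ne i iR with rfl | hi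
    · rw [Function.update_self]
      refine ⟨h i, ?_⟩
      intro hmem
      simp only [Set.mem_singleton_iff] at hmem
      apply hdangling (restrict (sch iS) t) (h iS)
      rw [← hmem, restrict_restrict _ _ t Finset.inter_subset_left,
        restrict_restrict _ _ t Finset.inter_subset_right]
    · rw [Function.update_of_ne hi]; exact h i
  · intro h i
    rcases eq_or_ne i iR with rfl | hi
    · have := h i; rw [Function.update_self] at this; exact this.1
    · have := h i; rwa [Function.update_of_ne hi] at this
end

section
/- Let Q be a query with atoms R_1,...,R_n and suppose R_i is an ear with parent R_j (i.e., Σ(R_i) ∩ ⋃_{k≠i} Σ(R_k) ⊆ Σ(R_j)). If a tuple r_j ∈ R_j agrees with no tuple of R_i on keys(Q, R_i) = Σ(R_i) ∩ ⋃_{k≠i} Σ(R_k), then no tuple in the join of R_1,...,R_n projects onto r_j; hence deleting r_j from R_j preserves the join. -/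
theorem ttj_delete_lemma {A V : Type*} [DecidableEq A] {n : ℕ}
    (sch : Fin n → Finset A) (Rel : Fin n → Set (A → Option V))
    (hfin : ∀ i, (Rel i).Finite)
    (i j : Fin n) (hij : j ≠ i)
    -- keys(Q, R_i): attributes R_i shares with the other atoms
    (hparent : sch i ∩ (Finset.univ.erase i).biUnion sch ⊆ sch j)
    (rj : A → Option V) (hrj : rj ∈ Rel j)
    (hfail : ∀ s ∈ Rel i,
      restrict (sch i ∩ (Finset.univ.erase i).biUnion sch) rj ≠
      restrict (sch i ∩ (Finset.univ.erase i).biUnion sch) s) :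
    (∀ t ∈ JoinAll sch Rel, restrict (sch j) t ≠ rj) ∧
    JoinAll sch Rel = JoinAll sch (Function.update Rel j (Rel j \ {rj})) := by
  set keys := sch i ∩ (Finset.univ.erase i).biUnion sch with hkeys
  have main : ∀ t ∈ JoinAll sch Rel, restrict (sch j) t ≠ rj := by
    intro t ht heq
    apply hfail (restrict (sch i) t) (ht.2 i)
    funext a
    simp only [restrict]
    by_cases ha : a ∈ keys
    · have hai : a ∈ sch i := (Finset.mem_inter.mp ha).1
      have haj : a ∈ sch j := hparent ha
      rw [if_pos ha, if_pos ha, if_pos hai, ← heq]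
      simp [restrict, haj]
    · rw [if_neg ha, if_neg ha]
  refine ⟨main, ?_⟩
  ext t
  constructor
  · intro ht
    refine ⟨ht.1, fun k => ?_⟩
    by_cases hk : k = j
    · subst hk
      rw [Function.update_self]
      exact ⟨ht.2 k, main t ht⟩
    · rw [Function.update_of_ne hk]
      exact ht.2 k
  · intro ht
    refine ⟨ht.1, fun k => ?_⟩
    have := ht.2 k
    by_cases hk : k = j
    · subst hk
      rw [Function.update_self] at this
      exact this.1
    · rwa [Function.update_of_ne hk] at this
end

section
/- A hypergraph (query) whose hyperedges (atom schemas) can be reduced by a full GYO order (a permutation e_{p_1},...,e_{p_n} such that each e_{p_i} with i < n is an ear of the hypergraph with edges {e_{p_i},...,e_{p_n}}) admits a join tree: a tree on the hyperedges such that for every vertex v the set of hyperedges containing v induces a connected subtree. -/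
/-- `e i` is an ear of the sub-hypergraph with edge set `H`:
some other edge of `H` contains all vertices `e i` shares with the rest of `H`. -/
def IsEarOf {V : Type*} {n : ℕ} (e : Fin n → Finset V) (H : Set (Fin n))
    (i : Fin n) : Prop :=
  ∃ j ∈ H, j ≠ i ∧
    ((e i : Set V) ∩ ⋃ k ∈ H \ {i}, (e k : Set V)) ⊆ (e j : Set V)

/-- A join tree for the hypergraph with edges `e`: a tree on the edges such that
for every vertex the edges containing it induce a connected subtree. -/
def IsJoinTree {V : Type*} {n : ℕ} (e : Fin n → Finset V)
    (T : SimpleGraph (Fin n)) : Prop :=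
  T.IsTree ∧ ∀ v : V, (T.induce {i | v ∈ e i}).Preconnected



open SimpleGraph

lemma walk_support_eq_map {V' : Type*} {G : SimpleGraph V'} {u v : V'} (p : G.Walk u v) :
    p.support = (List.range (p.length + 1)).map p.getVert := by
  induction p with
  | nil => simp [List.range_succ]
  | cons h q ih =>
    rw [Walk.support_cons, ih]
    conv_rhs => rw [Walk.length_cons, List.range_succ_eq_map]
    rw [List.map_cons, List.map_map]
    rfl

lemma reach_to_target {α : Type*} (H : SimpleGraph α) (h : α → ℕ) (M : α)
    (step : ∀ a, a ≠ M → ∃ b, H.Adj a b ∧ h b < h a) : ∀ a, H.Reachable a M := by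
  have key : ∀ k a, h a ≤ k → H.Reachable a M := by
    intro k
    induction k with
    | zero =>
      intro a ha
      by_cases hM : a = M
      · exact hM ▸ Reachable.refl a
      · obtain ⟨b, _, hb⟩ := step a hM; omega
    | succ k ih =>
      intro a ha
      by_cases hM : a = M
      · exact hM ▸ Reachable.refl a
      · obtain ⟨b, hadj, hb⟩ := step a hM
        exact hadj.reachable.trans (ih b (by omega))
  exact fun a => key (h a) a le_rfl

lemma acyclic_of_parent {n : ℕ} (G : SimpleGraph (Fin n)) (par : Fin n → Fin n)
    (h : ∀ a b : Fin n, G.Adj a b → a < b → b = par a) : G.IsAcyclic := by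
  intro v c hc
  set L := c.length with hLdef
  have hL3 : 3 ≤ L := hc.three_le_length
  set g : ℕ → Fin n := c.getVert with hg
  -- injectivity on [1, L]
  have hnodup := hc.support_nodup
  rw [walk_support_eq_map c, ← hLdef, List.range_succ_eq_map, List.map_cons, List.tail_cons,
    List.map_map] at hnodup
  have inj : ∀ i < L, ∀ j < L, g (i + 1) = g (j + 1) → i = j := by
    intro i hi j hj hij
    exact List.inj_on_of_nodup_map hnodup (List.mem_range.2 hi) (List.mem_range.2 hj) hij
  -- minimum over indices [1, L]
  obtain ⟨i0, hi0mem, hi0min⟩ :=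
    (Finset.Icc 1 L).exists_min_image g ⟨1, Finset.mem_Icc.2 ⟨le_rfl, by omega⟩⟩
  rw [Finset.mem_Icc] at hi0mem
  have hi0min' : ∀ j ∈ Finset.Icc 1 L, g i0 ≤ g j := hi0min
  have hgL : g L = g 0 := by
    simp only [hg, hLdef, Walk.getVert_length, Walk.getVert_zero]
  set m := g i0 with hm
  set j1 := if i0 = L then 1 else i0 + 1 with hj1
  set j2 := if i0 = 1 then L else i0 - 1 with hj2
  have hj1mem : 1 ≤ j1 ∧ j1 ≤ L := by rw [hj1]; split <;> omega
  have hj2mem : 1 ≤ j2 ∧ j2 ≤ L := by rw [hj2]; split <;> omega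
  have hadj1 : G.Adj m (g j1) := by
    rw [hj1]
    split
    · rename_i hiL
      rw [hm, hiL, hgL]
      exact c.adj_getVert_succ (by omega)
    · exact c.adj_getVert_succ (by omega)
  have hadj2 : G.Adj m (g j2) := by
    rw [hj2]
    split
    · rename_i hi1
      rw [hm, hi1, hgL]
      exact (c.adj_getVert_succ (by omega)).symm
    · rename_i hi1
      have : i0 - 1 + 1 = i0 := by omega
      have h2 := (c.adj_getVert_succ (i := i0 - 1) (by omega)).symm
      rw [this] at h2
      exact h2
  have hlt1 : m < g j1 :=
    lt_of_le_of_ne (hi0min' j1 (Finset.mem_Icc.2 ⟨hj1mem.1, hj1mem.2⟩)) hadj1.ne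
  have hlt2 : m < g j2 :=
    lt_of_le_of_ne (hi0min' j2 (Finset.mem_Icc.2 ⟨hj2mem.1, hj2mem.2⟩)) hadj2.ne
  have e1 := h m (g j1) hadj1 hlt1
  have e2 := h m (g j2) hadj2 hlt2
  have hj12 : j1 ≠ j2 := by
    rw [hj1, hj2]; split <;> split <;> omega
  apply hj12
  have h1 : j1 - 1 + 1 = j1 := by omega
  have h2 : j2 - 1 + 1 = j2 := by omega
  have := inj (j1 - 1) (by omega) (j2 - 1) (by omega)
    (by rw [h1, h2, e1, e2])
  omega

theorem gyo_order_implies_join_tree {V : Type*} {n : ℕ} (hn : 0 < n)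
    (e : Fin n → Finset V) (p : Equiv.Perm (Fin n))
    (hGYO : ∀ i : Fin n, (i : ℕ) + 1 < n →
      IsEarOf e {x | ∃ j : Fin n, i ≤ j ∧ p j = x} (p i)) :
    ∃ T : SimpleGraph (Fin n), IsJoinTree e T := by
  classical
  set f : Fin n → Finset V := fun i => e (p i) with hf
  -- parent existence
  have hpar_ex : ∀ i : Fin n, ∃ k : Fin n, (i : ℕ) + 1 < n →
      i < k ∧ ((f i : Set V) ∩ ⋃ l ∈ {l : Fin n | i < l}, (f l : Set V)) ⊆ (f k : Set V) := by
    intro i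
    by_cases hi : (i : ℕ) + 1 < n
    · obtain ⟨j, hjH, hjne, hsub⟩ := hGYO i hi
      obtain ⟨k, hik, hpk⟩ := hjH
      refine ⟨k, fun _ => ⟨lt_of_le_of_ne hik (fun h => hjne (by rw [h]; exact hpk.symm)), ?_⟩⟩
      have hset : {x : Fin n | ∃ j : Fin n, i ≤ j ∧ p j = x} \ {p i} = p '' {l : Fin n | i < l} := by
        ext x
        constructor
        · rintro ⟨⟨l, hil, hpl⟩, hne⟩
          refine ⟨l, lt_of_le_of_ne hil (fun h => ?_), hpl⟩
          apply hne
          rw [← hpl, ← h]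
          rfl
        · rintro ⟨l, hil, hpl⟩
          exact ⟨⟨l, le_of_lt hil, hpl⟩, fun h => absurd (p.injective (hpl.trans h)) (ne_of_gt hil)⟩
      rw [hset] at hsub
      rw [Set.biUnion_image] at hsub
      rw [hf]
      simp only [hpk] at hsub ⊢
      exact hsub
    · exact ⟨i, fun h => absurd h hi⟩
  choose par hpar using hpar_ex
  -- the graph on positions
  set G : SimpleGraph (Fin n) := SimpleGraph.fromRel (fun a b => (a : ℕ) + 1 < n ∧ par a = b)
    with hG
  have hadjG : ∀ i : Fin n, (i : ℕ) + 1 < n → G.Adj i (par i) := by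
    intro i hi
    rw [hG, SimpleGraph.fromRel_adj]
    exact ⟨ne_of_lt (hpar i hi).1, Or.inl ⟨hi, rfl⟩⟩
  have hadj_par : ∀ a b : Fin n, G.Adj a b → a < b → b = par a := by
    intro a b hab hlt
    rw [hG, SimpleGraph.fromRel_adj] at hab
    rcases hab.2 with ⟨_, h⟩ | ⟨hb, h⟩
    · exact h.symm
    · exact absurd (h ▸ (hpar b hb).1) (not_lt.2 (le_of_lt hlt))
  -- the top vertex
  set t : Fin n := ⟨n - 1, by omega⟩ with ht
  have hne_t : ∀ i : Fin n, i ≠ t → (i : ℕ) + 1 < n := by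
    intro i hi
    have h1 : (i : ℕ) < n := i.isLt
    have h2 : (i : ℕ) ≠ n - 1 := fun h => hi (Fin.ext h)
    omega
  -- G is connected
  have hconn : G.Connected := by
    have hpre : G.Preconnected := by
      have hr := reach_to_target G (fun a => n - 1 - (a : ℕ)) t (by
        intro a ha
        have hlt := hne_t a ha
        refine ⟨par a, hadjG a hlt, ?_⟩
        have h1 := (hpar a hlt).1
        rw [Fin.lt_def] at h1
        have h2 : (a : ℕ) ≠ n - 1 := fun h => ha (Fin.ext h)
        have h3 := a.isLt
        show n - 1 - ((par a : Fin n) : ℕ) < n - 1 - ((a : Fin n) : ℕ)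
        omega)
      exact fun a b => (hr a).trans (hr b).symm
    have : Nonempty (Fin n) := ⟨⟨0, hn⟩⟩
    exact ⟨hpre⟩
  have hacyc : G.IsAcyclic := acyclic_of_parent G par hadj_par
  -- the final tree
  refine ⟨G.comap ⇑p.symm, ⟨?_, ?_⟩, ?_⟩
  · -- connected
    refine SimpleGraph.Connected.map ⟨⇑p, ?_⟩ p.surjective hconn
    intro a b hab
    simpa [SimpleGraph.comap] using hab
  · -- acyclic
    intro v c hc
    refine hacyc (c.map ⟨⇑p.symm, ?_⟩) (hc.map p.symm.injective)
    intro a b hab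
    exact hab
  · -- join tree condition
    intro v
    rintro ⟨a, ha⟩ ⟨b, hb⟩
    have ha' : v ∈ f (p.symm a) := by simp only [hf]; simpa using ha
    have hb' : v ∈ f (p.symm b) := by simp only [hf]; simpa using hb
    set S' : Set (Fin n) := {i | v ∈ f i} with hS'
    -- the maximum of S'
    set F : Finset (Fin n) := Finset.univ.filter (fun i => v ∈ f i) with hF
    have hFne : F.Nonempty := ⟨p.symm a, by simp [hF, ha']⟩
    set M : Fin n := F.max' hFne with hM
    have hMS : v ∈ f M := (Finset.mem_filter.1 (F.max'_mem hFne)).2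
    have hle : ∀ i : Fin n, v ∈ f i → i ≤ M :=
      fun i hi => F.le_max' i (by simp [hF, hi])
    -- reachability in the induced subgraph of G
    have hreach : ∀ x : S', (G.induce S').Reachable x ⟨M, hMS⟩ := by
      apply reach_to_target (G.induce S') (fun x => (M : ℕ) - (x : Fin n))
      rintro ⟨i, hi⟩ hne
      have hiM : i < M := lt_of_le_of_ne (hle i hi) (fun h => hne (Subtype.ext h))
      have hin : (i : ℕ) + 1 < n := by
        have h1 := Fin.lt_def.1 hiM
        have h2 := M.isLt
        omega
      obtain ⟨hplt, hsub⟩ := hpar i hin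
      have hparS : v ∈ f (par i) := by
        apply hsub
        refine ⟨hi, ?_⟩
        exact Set.mem_biUnion (show M ∈ {l : Fin n | i < l} from hiM) hMS
      refine ⟨⟨par i, hparS⟩, ?_, ?_⟩
      · exact hadjG i hin
      · have e1 := Fin.lt_def.1 hplt
        have e2 := Fin.lt_def.1 hiM
        show (M : ℕ) - ((par i : Fin n) : ℕ) < (M : ℕ) - ((i : Fin n) : ℕ)
        omega
    -- transfer via p
    let φ : G.induce S' →g (G.comap ⇑p.symm).induce {i | v ∈ e i} :=
      { toFun := fun x => ⟨p x.1, x.2⟩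
        map_rel' := by
          rintro ⟨x, hx⟩ ⟨y, hy⟩ hxy
          show G.Adj (p.symm (p x)) (p.symm (p y))
          simpa using hxy }
    have h1 := (hreach ⟨p.symm a, ha'⟩).map φ
    have h2 := (hreach ⟨p.symm b, hb'⟩).map φ
    have hφa : φ ⟨p.symm a, ha'⟩ = ⟨a, ha⟩ := Subtype.ext (p.apply_symm_apply a)
    have hφb : φ ⟨p.symm b, hb'⟩ = ⟨b, hb⟩ := Subtype.ext (p.apply_symm_apply b)
    rw [hφa] at h1
    rw [hφb] at h2
    exact h1.trans h2.symm
end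

section
/- Conversely, if a hypergraph admits a join tree, then it has a GYO reduction order: any leaf of the join tree is an ear (its intersection with the union of all other hyperedges is contained in its tree-neighbor), and removing leaves repeatedly yields a full reduction order. -/
/-! Order the hyperedges by decreasing distance from a root of the join tree. Every suffix of
this order is closed under stepping towards the root, so it induces a subtree `S`, and its
first hyperedge `l` has a neighbour `u` in the subtree `S \ {l}`. If `v ∈ e l ∩ e k` with
`k ∈ S \ {l}`, the unique tree path from `l` to `k` is `l` followed by the path inside
`S \ {l}`, so it passes through `u`; it also stays among the hyperedges containing `v`,
hence `v ∈ e u` and `l` is an ear. -/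

namespace SimpleGraph

variable {V : Type*} {G : SimpleGraph V}

lemma Preconnected.exists_isPath_support_subset_of_induce {s : Set V}
    (hs : (G.induce s).Preconnected) {x y : V} (hx : x ∈ s) (hy : y ∈ s) :
    ∃ p : G.Walk x y, p.IsPath ∧ ∀ z ∈ p.support, z ∈ s := by
  classical
  obtain ⟨w⟩ := hs ⟨x, hx⟩ ⟨y, hy⟩
  have hsupp : ∀ z ∈ (w.bypass.map (Embedding.induce s).toHom).support, z ∈ s := by
    simp only [Walk.support_map, List.mem_map]
    rintro _ ⟨z, -, rfl⟩
    exact z.2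
  exact ⟨_, w.bypass_isPath.map Subtype.val_injective, hsupp⟩

lemma induce_preconnected_of_forall_exists_adj_lt {s : Set V} {r : V} (hr : r ∈ s)
    (d : V → ℕ) (hd : ∀ x ∈ s, x ≠ r → ∃ y ∈ s, G.Adj x y ∧ d y < d x) :
    (G.induce s).Preconnected := by
  suffices h : ∀ x (hx : x ∈ s), (G.induce s).Reachable ⟨x, hx⟩ ⟨r, hr⟩ from
    fun a b => (h a a.2).trans (h b b.2).symm
  intro x
  induction hdx : d x using Nat.strong_induction_on generalizing x with
  | _ k ih =>
    intro hx
    by_cases hxr : x = r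
    · subst hxr; rfl
    obtain ⟨y, hy, hxy, hlt⟩ := hd x hx hxr
    have hxy' : (G.induce s).Adj ⟨x, hx⟩ ⟨y, hy⟩ := hxy
    exact hxy'.reachable.trans (ih _ (hdx ▸ hlt) y rfl hy)

lemma Connected.exists_adj_dist_lt (hG : G.Connected) {r x : V} (hxr : x ≠ r) :
    ∃ y, G.Adj x y ∧ G.dist r y < G.dist r x := by
  obtain ⟨p, hp⟩ := hG.exists_walk_length_eq_dist x r
  have hnil : ¬p.Nil := Walk.not_nil_of_ne hxr
  refine ⟨p.snd, p.adj_snd hnil, ?_⟩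
  calc G.dist r p.snd = G.dist p.snd r := dist_comm
    _ ≤ p.tail.length := dist_le p.tail
    _ < p.length := by rw [← p.length_tail_add_one hnil]; omega
    _ = G.dist r x := hp.trans dist_comm

lemma Connected.exists_perm_induce_image_Ici_preconnected {n : ℕ} {G : SimpleGraph (Fin n)}
    (hG : G.Connected) :
    ∃ p : Equiv.Perm (Fin n), ∀ i, (G.induce (p '' Set.Ici i)).Preconnected := by
  obtain ⟨r⟩ := hG.nonempty
  set p := Tuple.sort fun x => OrderDual.toDual (G.dist r x)
  have hanti : ∀ {i j}, i ≤ j → G.dist r (p j) ≤ G.dist r (p i) := fun h =>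
    OrderDual.toDual_le_toDual.mp (Tuple.monotone_sort (fun x => OrderDual.toDual (G.dist r x)) h)
  refine ⟨p, fun i => induce_preconnected_of_forall_exists_adj_lt (r := r) ?_ (G.dist r) ?_⟩
  · by_cases hi : i ≤ p.symm r
    · exact ⟨p.symm r, hi, p.apply_symm_apply r⟩
    · have := hanti (le_of_not_ge hi)
      rw [p.apply_symm_apply, dist_self, Nat.le_zero, hG.dist_eq_zero_iff] at this
      exact ⟨i, Set.self_mem_Ici, this.symm⟩
  · rintro _ ⟨j, hij, rfl⟩ hjr
    obtain ⟨y, hadj, hlt⟩ := hG.exists_adj_dist_lt hjr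
    refine ⟨y, ⟨p.symm y, Set.mem_Ici.mpr (hij.trans ?_), p.apply_symm_apply y⟩, hadj, hlt⟩
    by_contra! hyj
    have := hanti hyj.le
    rw [p.apply_symm_apply] at this
    omega

lemma IsAcyclic.mem_of_adj_of_induce_preconnected (hG : G.IsAcyclic) {s t : Set V}
    {l u k : V} (hadj : G.Adj l u) (hs : (G.induce s).Preconnected) (hl : l ∉ s) (hu : u ∈ s)
    (hk : k ∈ s) (ht : (G.induce t).Preconnected) (hlt : l ∈ t) (hkt : k ∈ t) : u ∈ t := by
  obtain ⟨p, hp, hps⟩ := hs.exists_isPath_support_subset_of_induce hu hk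
  obtain ⟨q, hq, hqt⟩ := ht.exists_isPath_support_subset_of_induce hlt hkt
  have hlp : (Walk.cons hadj p).IsPath := hp.cons fun h => hl (hps l h)
  have hpq : Walk.cons hadj p = q :=
    congrArg Subtype.val ((hG.subsingleton_path l k).allEq ⟨_, hlp⟩ ⟨q, hq⟩)
  exact hqt u (hpq ▸ by simp)

end SimpleGraph

open SimpleGraph

lemma IsJoinTree.isEarOf {V : Type*} {n : ℕ} {e : Fin n → Finset V} {T : SimpleGraph (Fin n)}
    (hT : IsJoinTree e T) {H : Set (Fin n)} {i j : Fin n} (hH : (T.induce H).Preconnected)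
    (hi : i ∈ H) (hj : j ∈ H \ {i}) (hrest : (T.induce (H \ {i})).Preconnected) :
    IsEarOf e H i := by
  obtain ⟨p, -, hpH⟩ := hH.exists_isPath_support_subset_of_induce hi hj.1
  have hnil : ¬p.Nil := Walk.not_nil_of_ne (Ne.symm hj.2)
  have hu : p.snd ∈ H \ {i} :=
    ⟨hpH _ (List.mem_of_mem_tail (p.snd_mem_tail_support hnil)), (p.adj_snd hnil).ne'⟩
  refine ⟨p.snd, hu.1, hu.2, ?_⟩
  rintro v ⟨hvi, hv⟩
  simp only [Set.mem_iUnion, exists_prop] at hv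
  obtain ⟨k, hk, hvk⟩ := hv
  exact hT.1.isAcyclic.mem_of_adj_of_induce_preconnected (p.adj_snd hnil) hrest
    (fun h => h.2 rfl) hu hk (hT.2 v) hvi hvk

theorem join_tree_implies_gyo_order {V : Type*} {n : ℕ}
    (e : Fin n → Finset V) (T : SimpleGraph (Fin n))
    (hT : IsJoinTree e T) :
    ∃ p : Equiv.Perm (Fin n), ∀ i : Fin n, (i : ℕ) + 1 < n →
      IsEarOf e {x | ∃ j : Fin n, i ≤ j ∧ p j = x} (p i) := by
  obtain ⟨p, hp⟩ := hT.1.connected.exists_perm_induce_image_Ici_preconnected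
  refine ⟨p, fun i hi => ?_⟩
  let i' : Fin n := ⟨i + 1, hi⟩
  have hrest : p '' Set.Ici i \ {p i} = p '' Set.Ici i' := by
    rw [← Set.image_singleton, ← Set.image_sdiff p.injective]
    congr 1
    ext j
    simp [i', Fin.le_def]
  exact hT.isEarOf (H := p '' Set.Ici i) (hp i) (Set.mem_image_of_mem p Set.self_mem_Ici)
    (hrest ▸ Set.mem_image_of_mem p Set.self_mem_Ici) (hrest ▸ hp i')
end

section
/- In any join tree T of a hypergraph H, every leaf e of T is an ear of H, with its unique neighbor in T serving as a parent of e. -/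
theorem join_tree_leaf_is_ear {V : Type*} {n : ℕ}
    (e : Fin n → Finset V) (T : SimpleGraph (Fin n))
    (hT : IsJoinTree e T)
    (i f : Fin n) (hleaf : T.neighborSet i = {f}) :
    f ≠ i ∧
    ((e i : Set V) ∩ ⋃ k ∈ ({i}ᶜ : Set (Fin n)), (e k : Set V)) ⊆ (e f : Set V) := by
  have hadj : T.Adj i f := by
    have : f ∈ T.neighborSet i := by rw [hleaf]; rfl
    exact this
  refine ⟨fun h => T.irrefl (h ▸ hadj), ?_⟩
  rintro v ⟨hvi, hvU⟩
  simp only [Set.mem_iUnion] at hvU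
  obtain ⟨k, hk, hvk⟩ := hvU
  have hki : k ≠ i := hk
  set S : Set (Fin n) := {j | v ∈ e j}
  have hiS : i ∈ S := hvi
  have hkS : k ∈ S := hvk
  have hreach := (hT.2 v ⟨i, hiS⟩ ⟨k, hkS⟩)
  obtain ⟨w⟩ := hreach
  have hne : (⟨i, hiS⟩ : S) ≠ ⟨k, hkS⟩ := by
    intro h; exact hki (congrArg Subtype.val h).symm
  cases w with
  | nil => exact absurd rfl hne
  | cons h p =>
    rename_i b
    have hadj' : T.Adj i b.val := h
    have : b.val ∈ T.neighborSet i := hadj'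
    rw [hleaf] at this
    have : b.val = f := this
    have := b.property
    rw [‹b.val = f›] at this
    exact this
end

section
/- Let Q = R_1 ⋈ ... ⋈ R_n be acyclic with join tree T rooted at R_1, and suppose each R_i, including the root, has been semijoin-reduced bottom-up against all its children in T, i.e., R_i ⋉ C = R_i for every child C of R_i, for all i. Then every tuple r_1 ∈ R_1 extends to a full output tuple: there exists t in the join with π_{Σ(R_1)}(t) = r_1. -/
theorem yannakakis_root_tuple_extends {A V : Type*} [DecidableEq A] {n : ℕ}
    (sch : Fin (n+1) → Finset A) (Rel : Fin (n+1) → Set (A → Option V))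
    (hfin : ∀ i, (Rel i).Finite)
    (hw : ∀ i, ∀ r ∈ Rel i, IsTuple (sch i) r)
    (par : Fin (n+1) → Fin (n+1))
    (hroot : par 0 = 0)
    (hpar : ∀ i, i ≠ 0 → par i < i)
    -- join tree (running intersection) property for the rooted tree
    (hjt : ∀ i : Fin (n+1), i ≠ 0 →
      ((sch i : Set A) ∩ ⋃ j ∈ {j : Fin (n+1) | j < i}, (sch j : Set A))
        ⊆ (sch (par i) : Set A))
    -- fully semijoin-reduced bottom-up: every parent tuple matches some child tuple
    (hred : ∀ i : Fin (n+1), i ≠ 0 → ∀ q ∈ Rel (par i), ∃ c ∈ Rel i,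
      restrict (sch (par i) ∩ sch i) q = restrict (sch (par i) ∩ sch i) c)
    (r : A → Option V) (hr : r ∈ Rel 0) :
    ∃ t ∈ JoinAll sch Rel, restrict (sch 0) t = r := by
  have key : ∀ m : ℕ, m ≤ n → ∃ t : A → Option V,
      IsTuple ((Finset.univ.filter (fun j : Fin (n+1) => (j : ℕ) ≤ m)).biUnion sch) t ∧
      (∀ j : Fin (n+1), (j : ℕ) ≤ m → restrict (sch j) t ∈ Rel j) ∧
      restrict (sch 0) t = r := by
    intro m
    induction m with
    | zero =>
      intro _
      have hr0 := hw 0 r hr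
      have hre : restrict (sch 0) r = r := by
        funext a
        by_cases h : a ∈ sch 0
        · simp [restrict, h]
        · have : ¬ (r a).isSome := fun hs => h ((hr0 a).mp hs)
          simp [restrict, h]
          exact (Option.not_isSome_iff_eq_none.mp this).symm
      have hset : (Finset.univ.filter (fun j : Fin (n+1) => (j : ℕ) ≤ 0)).biUnion sch
          = sch 0 := by
        ext a
        simp only [Finset.mem_biUnion, Finset.mem_filter, Finset.mem_univ, true_and,
          Nat.le_zero]
        constructor
        · rintro ⟨j, hj, ha⟩
          have : j = 0 := Fin.ext (by simpa using hj)
          rwa [this] at ha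
        · intro ha; exact ⟨0, by simp, ha⟩
      refine ⟨r, by rwa [hset], ?_, hre⟩
      intro j hj
      have : j = 0 := Fin.ext (by simpa using hj)
      rw [this, hre]; exact hr
    | succ m ih =>
      intro hm1
      obtain ⟨t, ht1, ht2, ht3⟩ := ih (by omega)
      set i : Fin (n+1) := ⟨m+1, by omega⟩ with hi_def
      have hi0 : i ≠ 0 := by
        intro h; exact Nat.succ_ne_zero m (by simpa [hi_def, Fin.ext_iff] using h)
      have hpi : ((par i : Fin (n+1)) : ℕ) ≤ m := by
        have := hpar i hi0
        have h2 : ((par i : Fin (n+1)) : ℕ) < m + 1 := this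
        omega
      have hq : restrict (sch (par i)) t ∈ Rel (par i) := ht2 (par i) hpi
      obtain ⟨c, hc, hagree⟩ := hred i hi0 _ hq
      set P := (Finset.univ.filter (fun j : Fin (n+1) => (j : ℕ) ≤ m)).biUnion sch with hP_def
      set t' : A → Option V := fun a => if a ∈ P then t a else c a with ht'_def
      have hsub : ∀ j : Fin (n+1), (j : ℕ) ≤ m → ∀ a ∈ sch j, a ∈ P := by
        intro j hj a ha
        exact Finset.mem_biUnion.mpr ⟨j, Finset.mem_filter.mpr ⟨Finset.mem_univ _, hj⟩, ha⟩
      -- on sch i, t' agrees with c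
      have h2 : ∀ a ∈ sch i, t' a = c a := by
        intro a ha
        by_cases hP : a ∈ P
        · obtain ⟨j, hj, haj⟩ := Finset.mem_biUnion.mp hP
          have hjm : (j : ℕ) ≤ m := (Finset.mem_filter.mp hj).2
          have hji : j < i := by
            show (j : ℕ) < (i : ℕ)
            simp only [hi_def]
            omega
          have hmem : a ∈ (sch (par i) : Set A) := by
            apply hjt i hi0
            refine ⟨ha, ?_⟩
            exact Set.mem_biUnion hji haj
          have hmem' : a ∈ sch (par i) := hmem
          have := congrFun hagree a
          simp only [restrict, Finset.mem_inter, hmem', ha, if_pos, and_self] at this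
          simp only [ht'_def, if_pos hP]
          simpa [hmem'] using this
        · simp [ht'_def, hP]
      -- restrict to old schemas is unchanged
      have hold : ∀ j : Fin (n+1), (j : ℕ) ≤ m →
          restrict (sch j) t' = restrict (sch j) t := by
        intro j hj
        funext a
        by_cases h : a ∈ sch j
        · have : a ∈ P := hsub j hj a h
          simp [restrict, h, ht'_def, this]
        · simp [restrict, h]
      -- new schema union
      have hPS : (Finset.univ.filter (fun j : Fin (n+1) => (j : ℕ) ≤ m+1)).biUnion sch
          = P ∪ sch i := by
        ext a
        simp only [hP_def, Finset.mem_union, Finset.mem_biUnion, Finset.mem_filter,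
          Finset.mem_univ, true_and]
        constructor
        · rintro ⟨j, hj, ha⟩
          by_cases h : (j : ℕ) ≤ m
          · exact Or.inl ⟨j, h, ha⟩
          · have : j = i := Fin.ext (by simp [hi_def]; omega)
            exact Or.inr (this ▸ ha)
        · rintro (⟨j, hj, ha⟩ | ha)
          · exact ⟨j, by omega, ha⟩
          · exact ⟨i, by simp [hi_def], ha⟩
      refine ⟨t', ?_, ?_, ?_⟩
      · rw [hPS]
        intro a
        by_cases hP : a ∈ P
        · simp only [ht'_def, if_pos hP]
          rw [ht1 a]
          simp [hP]
        · simp only [ht'_def, if_neg hP]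
          rw [hw i c hc a]
          simp [Finset.mem_union, hP]
      · intro j hj
        by_cases h : (j : ℕ) ≤ m
        · rw [hold j h]; exact ht2 j h
        · have hji : j = i := Fin.ext (by simp [hi_def]; omega)
          have hrc : restrict (sch i) t' = c := by
            funext a
            by_cases ha : a ∈ sch i
            · simp only [restrict, if_pos ha]
              exact h2 a ha
            · have : ¬ (c a).isSome := fun hs => ha ((hw i c hc a).mp hs)
              simp [restrict, ha]
              exact (Option.not_isSome_iff_eq_none.mp this).symm
          rw [hji, hrc]; exact hc
      · rw [hold 0 (by simp)]; exact ht3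
  obtain ⟨t, ht1, ht2, ht3⟩ := key n le_rfl
  have huniv : (Finset.univ.filter (fun j : Fin (n+1) => (j : ℕ) ≤ n)) = Finset.univ := by
    ext j; simp [Nat.lt_succ_iff.mp j.isLt]
  refine ⟨t, ⟨?_, fun j => ht2 j (Nat.lt_succ_iff.mp j.isLt)⟩, ht3⟩
  rwa [huniv] at ht1
end

section
/- With the same setup (join tree rooted at R_1, all relations fully semijoin-reduced bottom-up), every partial match extends: if t is a tuple over ⋃_{j ∈ S} Σ(R_j), where S is a subtree of T containing the root, with π_{Σ(R_j)}(t) ∈ R_j for all j ∈ S, then t extends to a tuple in the full join. -/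
private lemma restrict_eq_self_of_isTuple {A V : Type*} [DecidableEq A]
    {s : Finset A} {t : A → Option V} (h : IsTuple s t) : restrict s t = t := by
  funext a
  by_cases ha : a ∈ s
  · simp [restrict, ha]
  · have : t a = none := by
      rcases Option.eq_none_or_eq_some (t a) with h' | ⟨v, hv⟩
      · exact h'
      · exact absurd ((h a).mp (by simp [hv])) ha
    simp [restrict, ha, this]

theorem yannakakis_partial_match_extends {A V : Type*} [DecidableEq A] {n : ℕ}
    (sch : Fin (n+1) → Finset A) (Rel : Fin (n+1) → Set (A → Option V))
    (hfin : ∀ i, (Rel i).Finite)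
    (hw : ∀ i, ∀ r ∈ Rel i, IsTuple (sch i) r)
    (par : Fin (n+1) → Fin (n+1))
    (hroot : par 0 = 0)
    (hpar : ∀ i, i ≠ 0 → par i < i)
    (hjt : ∀ i : Fin (n+1), i ≠ 0 →
      ((sch i : Set A) ∩ ⋃ j ∈ {j : Fin (n+1) | j < i}, (sch j : Set A))
        ⊆ (sch (par i) : Set A))
    (hred : ∀ i : Fin (n+1), i ≠ 0 → ∀ q ∈ Rel (par i), ∃ c ∈ Rel i,
      restrict (sch (par i) ∩ sch i) q = restrict (sch (par i) ∩ sch i) c)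
    -- S: a subtree of nodes containing the root, closed under parents
    (S : Finset (Fin (n+1))) (h0 : (0 : Fin (n+1)) ∈ S)
    (hSclosed : ∀ i ∈ S, par i ∈ S)
    (t : A → Option V)
    (ht : IsTuple (S.biUnion sch) t)
    (hmatch : ∀ j ∈ S, restrict (sch j) t ∈ Rel j) :
    ∃ t' ∈ JoinAll sch Rel, restrict (S.biUnion sch) t' = t := by
  obtain ⟨k, hk⟩ : ∃ k, (Finset.univ \ S).card = k := ⟨_, rfl⟩
  induction k generalizing S t with
  | zero =>
    have hS : S = Finset.univ := by
      have h1 : Finset.univ \ S = ∅ := Finset.card_eq_zero.mp hk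
      apply Finset.eq_univ_of_forall
      intro x
      by_contra hx
      have : x ∈ Finset.univ \ S := Finset.mem_sdiff.mpr ⟨Finset.mem_univ x, hx⟩
      simp [h1] at this
    subst hS
    exact ⟨t, ⟨ht, fun i => hmatch i (Finset.mem_univ i)⟩,
      restrict_eq_self_of_isTuple ht⟩
  | succ k ih =>
    have hne : (Finset.univ \ S).Nonempty := by
      rw [← Finset.card_pos, hk]; omega
    set i := (Finset.univ \ S).min' hne with hidef
    have hiS : i ∉ S := (Finset.mem_sdiff.mp ((Finset.univ \ S).min'_mem hne)).2
    have hmin : ∀ j, j < i → j ∈ S := by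
      intro j hj
      by_contra hjS
      exact absurd ((Finset.univ \ S).min'_le j
        (Finset.mem_sdiff.mpr ⟨Finset.mem_univ j, hjS⟩)) (not_le.mpr hj)
    have hi0 : i ≠ 0 := fun h => hiS (h ▸ h0)
    have hpiS : par i ∈ S := hmin _ (hpar i hi0)
    have hq : restrict (sch (par i)) t ∈ Rel (par i) := hmatch _ hpiS
    obtain ⟨c, hc, hagree⟩ := hred i hi0 _ hq
    have hcT : IsTuple (sch i) c := hw i c hc
    -- key claim from the running intersection property
    have claim : ∀ m : ℕ, ∀ j ∈ S, j.val = m → ∀ a, a ∈ sch i → a ∈ sch j →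
        a ∈ sch (par i) := by
      intro m
      induction m using Nat.strong_induction_on with
      | _ m ihm =>
        intro j hj hjm a hai haj
        rcases lt_trichotomy j i with h | h | h
        · have : a ∈ ((sch i : Set A) ∩ ⋃ j' ∈ {j' : Fin (n+1) | j' < i}, (sch j' : Set A)) := by
            refine ⟨hai, ?_⟩
            simp only [Set.mem_iUnion, Set.mem_setOf_eq]
            exact ⟨j, h, haj⟩
          exact hjt i hi0 this
        · exact absurd (h ▸ hj) hiS
        · have hj0 : j ≠ 0 := by
            intro h'; rw [h'] at h; exact absurd h (by simp [Fin.not_lt, Fin.zero_le])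
          have hap : a ∈ sch (par j) := by
            apply hjt j hj0
            refine ⟨haj, ?_⟩
            simp only [Set.mem_iUnion, Set.mem_setOf_eq]
            exact ⟨i, h, hai⟩
          exact ihm (par j).val (by subst hjm; exact hpar j hj0) (par j)
            (hSclosed j hj) rfl a hai hap
    have hct : ∀ a, a ∈ sch i → a ∈ S.biUnion sch → t a = c a := by
      intro a hai ha
      obtain ⟨j, hj, haj⟩ := Finset.mem_biUnion.mp ha
      have hap : a ∈ sch (par i) := claim j.val j hj rfl a hai haj
      have := congrFun hagree a
      simp only [restrict, Finset.mem_inter, hap, hai, and_self, if_pos] at this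
      simpa [restrict, hap] using this
    set t' : A → Option V := fun a => if a ∈ S.biUnion sch then t a else c a with ht'def
    set S' := insert i S with hS'def
    have hk' : (Finset.univ \ S').card = k := by
      have : Finset.univ \ S' = (Finset.univ \ S).erase i := by
        ext x
        simp [hS'def, Finset.mem_sdiff, Finset.mem_erase, and_comm, not_or]
      rw [this, Finset.card_erase_of_mem ((Finset.univ \ S).min'_mem hne), hk]
      omega
    have hbU : ∀ a, a ∈ S'.biUnion sch ↔ a ∈ S.biUnion sch ∨ a ∈ sch i := by
      intro a
      simp only [Finset.mem_biUnion, hS'def, Finset.mem_insert]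
      constructor
      · rintro ⟨j, hj | hj, haj⟩
        · exact Or.inr (hj ▸ haj)
        · exact Or.inl ⟨j, hj, haj⟩
      · rintro (⟨j, hj, haj⟩ | h)
        · exact ⟨j, Or.inr hj, haj⟩
        · exact ⟨i, Or.inl rfl, h⟩
    have ht' : IsTuple (S'.biUnion sch) t' := by
      intro a
      rw [hbU a]
      by_cases ha : a ∈ S.biUnion sch
      · have h1 : t' a = t a := if_pos ha
        rw [h1, ht a]; tauto
      · have h1 : t' a = c a := if_neg ha
        rw [h1, hcT a]
        constructor
        · exact fun h => Or.inr h
        · rintro (h | h)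
          exacts [absurd h ha, h]
    have ht'i : restrict (sch i) t' = c := by
      funext a
      by_cases hai : a ∈ sch i
      · have h1 : restrict (sch i) t' a = t' a := if_pos hai
        by_cases ha : a ∈ S.biUnion sch
        · have h2 : t' a = t a := if_pos ha
          rw [h1, h2, hct a hai ha]
        · have h2 : t' a = c a := if_neg ha
          rw [h1, h2]
      · have : c a = none := by
          rcases Option.eq_none_or_eq_some (c a) with h' | ⟨v, hv⟩
          · exact h'
          · exact absurd ((hcT a).mp (by simp [hv])) hai
        simp [restrict, hai, this]
    have hmatch' : ∀ j ∈ S', restrict (sch j) t' ∈ Rel j := by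
      intro j hj
      rcases Finset.mem_insert.mp hj with rfl | hj
      · rw [ht'i]; exact hc
      · have : restrict (sch j) t' = restrict (sch j) t := by
          funext a
          by_cases haj : a ∈ sch j
          · have ha : a ∈ S.biUnion sch := Finset.mem_biUnion.mpr ⟨j, hj, haj⟩
            have h2 : t' a = t a := if_pos ha
            simp [restrict, haj, h2]
          · simp [restrict, haj]
        rw [this]; exact hmatch j hj
    have h0' : (0 : Fin (n+1)) ∈ S' := Finset.mem_insert_of_mem h0
    have hSclosed' : ∀ j ∈ S', par j ∈ S' := by
      intro j hj
      rcases Finset.mem_insert.mp hj with rfl | hj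
      · exact Finset.mem_insert_of_mem hpiS
      · exact Finset.mem_insert_of_mem (hSclosed j hj)
    obtain ⟨t'', ht''J, ht''r⟩ := ih S' h0' hSclosed' t' ht' hmatch' hk'
    refine ⟨t'', ht''J, ?_⟩
    funext a
    by_cases ha : a ∈ S.biUnion sch
    · have ha' : a ∈ S'.biUnion sch := (hbU a).mpr (Or.inl ha)
      have := congrFun ht''r a
      simp only [restrict, ha', if_pos] at this
      have h2 : t' a = t a := if_pos ha
      simp [restrict, ha, this, h2]
    · have : t a = none := by
        rcases Option.eq_none_or_eq_some (t a) with h' | ⟨v, hv⟩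
        · exact h'
        · exact absurd ((ht a).mp (by simp [hv])) ha
      simp [restrict, ha, this]
end
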